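/- Let X be a positive definite n×n complex matrix with m·I ≤ X ≤ M·I for 0 < m ≤ M. Then X + Mm·X⁻¹ ≤ (M + m)·I in the Loewner order. -/

import Mathlib

/-!
For `x ∈ [m, M]` with `m > 0` one has `M + m - x - Mm/x = (M - x)(x - m)/x ≥ 0`. Since
`m ≤ X ≤ M` puts the spectrum of `X` in `[m, M]`, the continuous functional calculus turns this
scalar inequality into the operator inequality, with `X + Mm X⁻¹ = f(X)` for `f x = x + Mm/x`.
-/

open Matrix
open scoped ComplexOrder

noncomputable section
namespace Paper

variable {n : ℕ}

/-- Real part `(A + Aᴴ)/2`. -/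
def re (A : Matrix (Fin n) (Fin n) ℂ) : Matrix (Fin n) (Fin n) ℂ := (2⁻¹ : ℂ) • (A + Aᴴ)

/-- Imaginary part `(A - Aᴴ)/(2i)`. -/
def im (A : Matrix (Fin n) (Fin n) ℂ) : Matrix (Fin n) (Fin n) ℂ :=
  (2 * Complex.I)⁻¹ • (A - Aᴴ)

/-- The sector `S_α`. -/
def sector (α : ℝ) : Set ℂ := {z | 0 < z.re ∧ |z.im| ≤ z.re * Real.tan α}

/-- Numerical range of a matrix. -/
def numericalRange (A : Matrix (Fin n) (Fin n) ℂ) : Set ℂ :=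
  {z | ∃ x : Fin n → ℂ, star x ⬝ᵥ x = 1 ∧ z = star x ⬝ᵥ (A *ᵥ x)}

/-- Loewner order: `X ≤ Y` iff `Y - X` is positive semidefinite. -/
def loewnerLE (X Y : Matrix (Fin n) (Fin n) ℂ) : Prop := (Y - X).PosSemidef

lemma re_isHermitian (A : Matrix (Fin n) (Fin n) ℂ) : (re A).IsHermitian := by
  show ((2⁻¹ : ℂ) • (A + Aᴴ))ᴴ = (2⁻¹ : ℂ) • (A + Aᴴ)
  rw [Matrix.conjTranspose_smul, Matrix.conjTranspose_add,
    Matrix.conjTranspose_conjTranspose, add_comm Aᴴ A]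
  simp

/-- The `j`-th largest element of `v` (descending sort). -/
def nthLargest (v : Fin n → ℝ) (j : Fin n) : ℝ :=
  ((List.ofFn v).mergeSort (fun a b => decide (b ≤ a))).get
    (Fin.cast (by simp) j)

/-- `j`-th largest eigenvalue of a Hermitian matrix. -/
def eigDesc {A : Matrix (Fin n) (Fin n) ℂ} (hA : A.IsHermitian) (j : Fin n) : ℝ :=
  nthLargest hA.eigenvalues j

/-- `j`-th largest singular value. -/
def singular (A : Matrix (Fin n) (Fin n) ℂ) (j : Fin n) : ℝ :=
  nthLargest (fun i => Real.sqrt ((Matrix.isHermitian_conjTranspose_mul_self A).eigenvalues i)) j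

/-- Square root of a positive semidefinite matrix (the former Mathlib `PosSemidef.sqrt`). -/
def psdSqrt {A : Matrix (Fin n) (Fin n) ℂ} (hA : A.PosSemidef) : Matrix (Fin n) (Fin n) ℂ :=
  hA.1.eigenvectorUnitary.1 * diagonal (((↑) : ℝ → ℂ) ∘ (√·) ∘ hA.1.eigenvalues) *
    (star hA.1.eigenvectorUnitary : Matrix (Fin n) (Fin n) ℂ)

/-- Weighted geometric mean of positive definite matrices. -/
def sharp (v : ℝ) {A B : Matrix (Fin n) (Fin n) ℂ} (hA : A.PosDef) (hB : B.PosDef) :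
    Matrix (Fin n) (Fin n) ℂ :=
  psdSqrt hA.posSemidef *
    (Matrix.isHermitian_mul_mul_conjTranspose (psdSqrt hA.posSemidef)⁻¹ hB.1).cfc
      (fun x => Real.rpow x v) * psdSqrt hA.posSemidef

/-- Weighted arithmetic mean. -/
def arith (v : ℝ) (A B : Matrix (Fin n) (Fin n) ℂ) : Matrix (Fin n) (Fin n) ℂ :=
  (1 - v) • A + v • B

/-- Weighted harmonic mean. -/
def harm (v : ℝ) (A B : Matrix (Fin n) (Fin n) ℂ) : Matrix (Fin n) (Fin n) ℂ :=
  ((1 - v) • A⁻¹ + v • B⁻¹)⁻¹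

/-- Kantorovich constant. -/
def K (h : ℝ) : ℝ := (h + 1) ^ 2 / (4 * h)

theorem add_mul_mul_inv_le_add {m M x : ℝ} (hm : 0 < m) (hmx : m ≤ x) (hxM : x ≤ M) :
    x + M * m * x⁻¹ ≤ M + m := by
  have hx : 0 < x := hm.trans_le hmx
  have factor : M + m - (x + M * m * x⁻¹) = (M - x) * (x - m) / x := by
    field_simp
    ring
  have factor_nonneg : 0 ≤ (M - x) * (x - m) / x :=
    div_nonneg (mul_nonneg (by linarith) (by linarith)) hx.le
  linarith

section ContinuousFunctionalCalculus

variable {A : Type*} [Ring A] [StarRing A] [PartialOrder A] [StarOrderedRing A]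
  [TopologicalSpace A] [Algebra ℝ A] [StarModule ℝ A]
  [ContinuousFunctionalCalculus ℝ A IsSelfAdjoint] [NonnegSpectrumClass ℝ A]

theorem add_smul_ringInverse_le {a : A} {m M : ℝ} (hm : 0 < m)
    (hma : algebraMap ℝ A m ≤ a) (haM : a ≤ algebraMap ℝ A M) :
    a + (M * m) • Ring.inverse a ≤ algebraMap ℝ A (M + m) := by
  have ha : IsSelfAdjoint a := by
    simpa using (IsSelfAdjoint.of_nonneg (sub_nonneg.mpr hma)).add (.algebraMap A (.all m))
  have spectrum_ge : ∀ x ∈ spectrum ℝ a, m ≤ x := (algebraMap_le_iff_le_spectrum ha).mp hma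
  have spectrum_le : ∀ x ∈ spectrum ℝ a, x ≤ M := (le_algebraMap_iff_spectrum_le ha).mp haM
  have spectrum_ne : ∀ x ∈ spectrum ℝ a, x ≠ 0 := fun x hx => (hm.trans_le (spectrum_ge x hx)).ne'
  have cfc_inv_eq : cfc (·⁻¹ : ℝ → ℝ) a = Ring.inverse a := by
    simpa [cfc_id ℝ a] using cfc_inv id a spectrum_ne
  have cfc_eq : a + (M * m) • Ring.inverse a = cfc (fun x => x + M * m * x⁻¹) a := by
    rw [cfc_add .., cfc_const_mul .., cfc_id' ℝ a, cfc_inv_eq]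
  rw [cfc_eq]
  exact cfc_le_algebraMap _ _ a fun x hx =>
    add_mul_mul_inv_le_add hm (spectrum_ge x hx) (spectrum_le x hx)

end ContinuousFunctionalCalculus

theorem add_smul_inv_le_general (X : Matrix (Fin n) (Fin n) ℂ)
    (m M : ℝ) (hm : 0 < m)
    (h1 : loewnerLE (m • (1 : Matrix (Fin n) (Fin n) ℂ)) X) (h2 : loewnerLE X (M • 1)) :
    loewnerLE (X + (M * m) • X⁻¹) ((M + m) • 1) := by
  simp only [loewnerLE, ← Algebra.algebraMap_eq_smul_one, nonsing_inv_eq_ringInverse] at h1 h2 ⊢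
  open scoped MatrixOrder in
  exact add_smul_ringInverse_le (A := Matrix (Fin n) (Fin n) ℂ) hm h1 h2

/-- `X + Mm X⁻¹ ≤ (M + m) I`. -/
theorem add_smul_inv_le (X : Matrix (Fin n) (Fin n) ℂ) (hX : X.PosDef)
    (m M : ℝ) (hm : 0 < m) (hmM : m ≤ M)
    (h1 : loewnerLE (m • (1 : Matrix (Fin n) (Fin n) ℂ)) X) (h2 : loewnerLE X (M • 1)) :
    loewnerLE (X + (M * m) • X⁻¹) ((M + m) • 1) :=
  add_smul_inv_le_general X m M hm h1 h2

end Paper
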